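/- arXiv:2004.01832 — 3 statements merged into one kernel-verified Lean document; each statement's English description precedes it below -/
import Mathlib

section
/- Let c ∈ ℝ, g ∈ ℝ^d, A a d×d real symmetric matrix, and ε > 0. Define H = [[A, g], [gᵀ, 1]] ∈ ℝ^{(d+1)×(d+1)}. Then the supremum over all δ ∈ ℝ^d with ‖δ‖_∞ ≤ ε of c + gᵀδ + ½ δᵀAδ is at most c + ((dε² + 1)/2) ‖H‖_F − ½, where ‖H‖_F is the Frobenius norm of H. -/
/-!
Put `z = (δ, 1)`. The bordered matrix `H` is built so that `zᵀHz = δᵀAδ + 2gᵀδ + 1`, i.e. twice the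
Taylor polynomial minus `2c - 1`. By Cauchy–Schwarz in `ℝ^{(d+1)×(d+1)}` (which bounds the spectral
norm of `H` by its Frobenius norm), `zᵀHz ≤ ‖z‖₂² ‖H‖_F`, and `‖δ‖_∞ ≤ ε` gives `‖z‖₂² ≤ dε² + 1`.
-/

open Matrix

section QuadraticForm

variable {n : Type*} [Fintype n]

theorem dotProduct_self_le_card_mul_sq {δ : n → ℝ} {ε : ℝ} (hδ : ∀ i, |δ i| ≤ ε) :
    δ ⬝ᵥ δ ≤ Fintype.card n * ε ^ 2 := by
  calc δ ⬝ᵥ δ = ∑ i, δ i ^ 2 := by simp only [dotProduct, sq]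
    _ ≤ ∑ _i : n, ε ^ 2 := Finset.sum_le_sum fun i _ => sq_le_sq' (neg_le_of_abs_le (hδ i))
      (le_of_abs_le (hδ i))
    _ = Fintype.card n * ε ^ 2 := by simp

theorem trace_transpose_mul_self_eq_sum_sq (M : Matrix n n ℝ) :
    trace (Mᵀ * M) = ∑ i, ∑ j, M i j ^ 2 := by
  simp only [trace, diag, mul_apply, transpose_apply, sq]
  exact Finset.sum_comm

theorem dotProduct_mulVec_le_dotProduct_self_mul_frobenius (M : Matrix n n ℝ) (z : n → ℝ) :
    z ⬝ᵥ M *ᵥ z ≤ (z ⬝ᵥ z) * √(trace (Mᵀ * M)) := by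
  have hquad : z ⬝ᵥ M *ᵥ z = ∑ p : n × n, (z p.1 * z p.2) * M p.1 p.2 := by
    simp only [Fintype.sum_prod_type, dotProduct, mulVec, Finset.mul_sum]
    exact Finset.sum_congr rfl fun i _ => Finset.sum_congr rfl fun j _ => by ring
  have hnorm : ∑ p : n × n, (z p.1 * z p.2) ^ 2 = (z ⬝ᵥ z) ^ 2 := by
    simp only [Fintype.sum_prod_type, dotProduct, sq, Finset.sum_mul_sum]
    exact Finset.sum_congr rfl fun i _ => Finset.sum_congr rfl fun j _ => by ring
  have hz : 0 ≤ z ⬝ᵥ z := Finset.sum_nonneg fun i _ => mul_self_nonneg (z i)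
  calc z ⬝ᵥ M *ᵥ z
      ≤ √(∑ p : n × n, (z p.1 * z p.2) ^ 2) * √(∑ p : n × n, M p.1 p.2 ^ 2) :=
        hquad ▸ Real.sum_mul_le_sqrt_mul_sqrt _ _ _
    _ = (z ⬝ᵥ z) * √(trace (Mᵀ * M)) := by
        rw [hnorm, Real.sqrt_sq hz, Fintype.sum_prod_type, trace_transpose_mul_self_eq_sum_sq]

end QuadraticForm

def borderedMatrix {n R : Type*} [Zero R] [One R] (A : Matrix n n R) (g : n → R) :
    Matrix (n ⊕ Unit) (n ⊕ Unit) R :=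
  fromBlocks A (of fun i _ => g i) (of fun _ j => g j) 1

theorem sumElim_dotProduct_borderedMatrix_mulVec {n R : Type*} [Fintype n] [CommSemiring R]
    (A : Matrix n n R) (g δ : n → R) :
    Sum.elim δ 1 ⬝ᵥ borderedMatrix A g *ᵥ Sum.elim δ 1 = δ ⬝ᵥ A *ᵥ δ + 2 * (g ⬝ᵥ δ) + 1 := by
  have hcol : (of fun i (_ : Unit) => g i) *ᵥ 1 = g := by ext; simp [mulVec, dotProduct]
  have hrow : (of fun (_ : Unit) j => g j) *ᵥ δ = fun _ => g ⬝ᵥ δ := rfl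
  simp [borderedMatrix, fromBlocks_mulVec, sumElim_dotProduct_sumElim, hcol, hrow,
    dotProduct_comm δ g]
  ring

theorem stmt6_general (d : ℕ) (c : ℝ) (g : Fin d → ℝ) (A : Matrix (Fin d) (Fin d) ℝ)
    (ε : ℝ) (hε : 0 < ε) :
    let H : Matrix (Fin d ⊕ Unit) (Fin d ⊕ Unit) ℝ :=
      Matrix.fromBlocks A (Matrix.of fun i _ => g i) (Matrix.of fun _ j => g j) 1
    sSup {y : ℝ | ∃ δ : Fin d → ℝ, (∀ i, |δ i| ≤ ε) ∧
        y = c + g ⬝ᵥ δ + (1 / 2) * (δ ⬝ᵥ A.mulVec δ)}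
      ≤ c + ((d * ε ^ 2 + 1) / 2) * Real.sqrt (Matrix.trace (Hᵀ * H)) - 1 / 2 := by
  intro H
  refine csSup_le ⟨_, 0, fun _ => by simpa using hε.le, rfl⟩ ?_
  rintro _ ⟨δ, hδ, rfl⟩
  have hz : Sum.elim δ (1 : Unit → ℝ) ⬝ᵥ Sum.elim δ 1 ≤ d * ε ^ 2 + 1 := by
    simpa [sumElim_dotProduct_sumElim] using dotProduct_self_le_card_mul_sq hδ
  have hQ : δ ⬝ᵥ A *ᵥ δ + 2 * (g ⬝ᵥ δ) + 1 ≤ (d * ε ^ 2 + 1) * √(trace (Hᵀ * H)) := by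
    rw [← sumElim_dotProduct_borderedMatrix_mulVec]
    exact (dotProduct_mulVec_le_dotProduct_self_mul_frobenius H _).trans (by gcongr)
  linarith

/-- Proposition 1 of the paper (with `E‖Hz‖` replaced by the Frobenius norm it
estimates). With `H = [[A, g], [gᵀ, 1]]`, the supremum over `‖δ‖_∞ ≤ ε` of the second-order
Taylor expansion `c + gᵀδ + ½ δᵀAδ` is at most `c + ((dε² + 1)/2)·‖H‖_F − ½`. -/
theorem stmt6 (d : ℕ) (c : ℝ) (g : Fin d → ℝ) (A : Matrix (Fin d) (Fin d) ℝ)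
    (hA : A.IsSymm) (ε : ℝ) (hε : 0 < ε) :
    let H : Matrix (Fin d ⊕ Unit) (Fin d ⊕ Unit) ℝ :=
      Matrix.fromBlocks A (Matrix.of fun i _ => g i) (Matrix.of fun _ j => g j) 1
    sSup {y : ℝ | ∃ δ : Fin d → ℝ, (∀ i, |δ i| ≤ ε) ∧
        y = c + g ⬝ᵥ δ + (1 / 2) * (δ ⬝ᵥ A.mulVec δ)}
      ≤ c + ((d * ε ^ 2 + 1) / 2) * Real.sqrt (Matrix.trace (Hᵀ * H)) - 1 / 2 :=
  stmt6_general d c g A ε hε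
end

section
/- Let c ∈ ℝ, g ∈ ℝ^d, A a d×d real symmetric matrix, and ε > 0. Define H = [[A, g], [gᵀ, 1]] ∈ ℝ^{(d+1)×(d+1)}. Then the supremum over all δ ∈ ℝ^d with ‖δ‖₂ ≤ ε of c + gᵀδ + ½ δᵀAδ is at most c + ((ε² + 1)/2) ‖H‖_F − ½. -/
/-!
With `z = (δ, 1)`, the objective is `c + ½ zᵀHz - ½`. Cauchy–Schwarz for the Frobenius inner
product of `H` and `z zᵀ` gives `zᵀHz ≤ ‖H‖_F ‖z‖² = ‖H‖_F (‖δ‖² + 1) ≤ ‖H‖_F (ε² + 1)`.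
-/

open Matrix

theorem Matrix.trace_transpose_mul_self {m n R : Type*} [Fintype m] [Fintype n] [CommSemiring R]
    (H : Matrix m n R) : trace (Hᵀ * H) = ∑ i, ∑ j, H i j ^ 2 := by
  simp only [trace, diag, mul_apply, transpose_apply, ← sq]
  exact Finset.sum_comm

theorem Matrix.dotProduct_mulVec_le_sqrt_sum_sq_mul {ι : Type*} [Fintype ι] (H : Matrix ι ι ℝ)
    (z : ι → ℝ) : z ⬝ᵥ H *ᵥ z ≤ √(∑ i, ∑ j, H i j ^ 2) * (z ⬝ᵥ z) := by
  have hquad : z ⬝ᵥ H *ᵥ z = ∑ p : ι × ι, H p.1 p.2 * (z p.1 * z p.2) := by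
    simp only [dotProduct, mulVec, Finset.mul_sum, ← Finset.univ_product_univ, Finset.sum_product]
    exact Finset.sum_congr rfl fun i _ => Finset.sum_congr rfl fun j _ => by ring
  have hsq : ∑ p : ι × ι, (z p.1 * z p.2) ^ 2 = (z ⬝ᵥ z) ^ 2 := by
    simp only [dotProduct, sq, Finset.sum_mul_sum, ← Finset.univ_product_univ, Finset.sum_product]
    exact Finset.sum_congr rfl fun i _ => Finset.sum_congr rfl fun j _ => by ring
  calc z ⬝ᵥ H *ᵥ z ≤ √(∑ p : ι × ι, H p.1 p.2 ^ 2) * √(∑ p : ι × ι, (z p.1 * z p.2) ^ 2) :=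
        hquad ▸ Real.sum_mul_le_sqrt_mul_sqrt _ _ _
    _ = √(∑ i, ∑ j, H i j ^ 2) * (z ⬝ᵥ z) := by
        have hz : 0 ≤ z ⬝ᵥ z := Finset.sum_nonneg fun i _ => mul_self_nonneg (z i)
        rw [hsq, Real.sqrt_sq hz, ← Finset.univ_product_univ, Finset.sum_product]

theorem Matrix.sumElim_dotProduct_fromBlocks_mulVec_sumElim {n R : Type*} [Fintype n] [CommRing R]
    (A : Matrix n n R) (g δ : n → R) :
    Sum.elim δ (fun _ : Unit => 1) ⬝ᵥ
        fromBlocks A (of fun i _ => g i) (of fun _ j => g j) (1 : Matrix Unit Unit R) *ᵥ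
          Sum.elim δ (fun _ => 1) =
      δ ⬝ᵥ A *ᵥ δ + 2 * (g ⬝ᵥ δ) + 1 := by
  have hB : (of fun i (_ : Unit) => g i) *ᵥ (fun _ => 1) = g := by
    ext i; simp [mulVec, dotProduct]
  have hC : (of fun (_ : Unit) j => g j) *ᵥ δ = fun _ => g ⬝ᵥ δ := by
    ext; rfl
  rw [fromBlocks_mulVec, sumElim_dotProduct_sumElim]
  simp only [Function.comp_def, Sum.elim_inl, Sum.elim_inr, hB, hC, one_mulVec, dotProduct_add]
  simp [dotProduct_comm δ g]
  ring

theorem stmt7_general (d : ℕ) (c : ℝ) (g : Fin d → ℝ) (A : Matrix (Fin d) (Fin d) ℝ)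
    (ε : ℝ) (hε : 0 < ε) :
    let H : Matrix (Fin d ⊕ Unit) (Fin d ⊕ Unit) ℝ :=
      Matrix.fromBlocks A (Matrix.of fun i _ => g i) (Matrix.of fun _ j => g j) 1
    sSup {y : ℝ | ∃ δ : Fin d → ℝ, Real.sqrt (∑ i, (δ i) ^ 2) ≤ ε ∧
        y = c + g ⬝ᵥ δ + (1 / 2) * (δ ⬝ᵥ A.mulVec δ)}
      ≤ c + ((ε ^ 2 + 1) / 2) * Real.sqrt (Matrix.trace (Hᵀ * H)) - 1 / 2 := by
  intro H
  refine csSup_le ⟨c, 0, by simp [hε.le], by simp⟩ ?_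
  rintro _ ⟨δ, hδ, rfl⟩
  have hδε : δ ⬝ᵥ δ ≤ ε ^ 2 := by
    simpa [dotProduct, ← sq] using (Real.sqrt_le_iff.mp hδ).2
  set z : Fin d ⊕ Unit → ℝ := Sum.elim δ fun _ => 1
  have hz : z ⬝ᵥ z = δ ⬝ᵥ δ + 1 := by simp [z, sumElim_dotProduct_sumElim]
  have hzHz : z ⬝ᵥ H *ᵥ z = δ ⬝ᵥ A *ᵥ δ + 2 * (g ⬝ᵥ δ) + 1 :=
    sumElim_dotProduct_fromBlocks_mulVec_sumElim A g δ
  have hHz := dotProduct_mulVec_le_sqrt_sum_sq_mul H z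
  rw [hzHz, hz] at hHz
  rw [trace_transpose_mul_self]
  calc c + g ⬝ᵥ δ + 1 / 2 * (δ ⬝ᵥ A *ᵥ δ)
      = c + (δ ⬝ᵥ A *ᵥ δ + 2 * (g ⬝ᵥ δ) + 1) / 2 - 1 / 2 := by ring
    _ ≤ c + √(∑ i, ∑ j, H i j ^ 2) * (δ ⬝ᵥ δ + 1) / 2 - 1 / 2 := by gcongr
    _ ≤ c + √(∑ i, ∑ j, H i j ^ 2) * (ε ^ 2 + 1) / 2 - 1 / 2 := by gcongr
    _ = c + (ε ^ 2 + 1) / 2 * √(∑ i, ∑ j, H i j ^ 2) - 1 / 2 := by ring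

/-- the ℓ₂ version of Proposition 1. With `H = [[A, g], [gᵀ, 1]]`, the supremum
over `‖δ‖₂ ≤ ε` of `c + gᵀδ + ½ δᵀAδ` is at most `c + ((ε² + 1)/2)·‖H‖_F − ½`. -/
theorem stmt7 (d : ℕ) (c : ℝ) (g : Fin d → ℝ) (A : Matrix (Fin d) (Fin d) ℝ)
    (hA : A.IsSymm) (ε : ℝ) (hε : 0 < ε) :
    let H : Matrix (Fin d ⊕ Unit) (Fin d ⊕ Unit) ℝ :=
      Matrix.fromBlocks A (Matrix.of fun i _ => g i) (Matrix.of fun _ j => g j) 1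
    sSup {y : ℝ | ∃ δ : Fin d → ℝ, Real.sqrt (∑ i, (δ i) ^ 2) ≤ ε ∧
        y = c + g ⬝ᵥ δ + (1 / 2) * (δ ⬝ᵥ A.mulVec δ)}
      ≤ c + ((ε ^ 2 + 1) / 2) * Real.sqrt (Matrix.trace (Hᵀ * H)) - 1 / 2 :=
  stmt7_general d c g A ε hε
end

section
/- Let w ∈ ℝ^d, r ∈ ℝ, u ≥ 0, and ρ > 0. Then the maximum over all δ ∈ ℝ^d with ‖δ‖₂ ≤ ρ of r·wᵀδ + ½ u (wᵀδ)² equals ρ|r|‖w‖₂ + ½ ρ² u ‖w‖₂². -/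
/-!
By Cauchy–Schwarz and connectedness of the ball, `δ ↦ wᵀδ` maps the ball of radius `ρ` onto
`[-ρ‖w‖, ρ‖w‖]`. On that interval `t ↦ r t + ½ u t²` is at most `|r||t| + ½ u t²`, which for
`u ≥ 0` increases with `|t|`; so the maximum is attained at the endpoint `t = ±ρ‖w‖` whose sign
agrees with that of `r`.
-/

open Real Set Metric WithLp
open scoped RealInnerProductSpace

theorem isGreatest_image_Icc_mul_add_sq (r : ℝ) {u M : ℝ} (hu : 0 ≤ u) (hM : 0 ≤ M) :
    IsGreatest ((fun t => r * t + 1 / 2 * u * t ^ 2) '' Icc (-M) M)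
      (|r| * M + 1 / 2 * u * M ^ 2) := by
  constructor
  · rcases le_or_gt 0 r with hr | hr
    · exact ⟨M, ⟨by linarith, le_rfl⟩, by rw [abs_of_nonneg hr]⟩
    · exact ⟨-M, ⟨le_rfl, by linarith⟩, by rw [abs_of_neg hr]; ring⟩
  · rintro _ ⟨t, ht, rfl⟩
    have hsq : t ^ 2 ≤ M ^ 2 := sq_le_sq' ht.1 ht.2
    have hlin : r * t ≤ |r| * M :=
      (le_abs_self _).trans (by rw [abs_mul]; gcongr; exact abs_le.2 ht)
    nlinarith

section InnerProductSpace

variable {E : Type*} [NormedAddCommGroup E] [InnerProductSpace ℝ E]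

theorem image_inner_closedBall_zero (w : E) {ρ : ℝ} (hρ : 0 ≤ ρ) :
    (fun δ => ⟪w, δ⟫) '' closedBall 0 ρ = Icc (-(ρ * ‖w‖)) (ρ * ‖w‖) := by
  refine Subset.antisymm ?_ ?_
  · rintro _ ⟨δ, hδ, rfl⟩
    rw [mem_closedBall_zero_iff] at hδ
    rw [mem_Icc, ← abs_le]
    calc |⟪w, δ⟫| ≤ ‖w‖ * ‖δ‖ := abs_real_inner_le_norm w δ
      _ ≤ ρ * ‖w‖ := by rw [mul_comm]; gcongr
  rcases eq_or_ne w 0 with rfl | hw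
  · simp [hρ]
  have hconn : IsPreconnected ((fun δ => ⟪w, δ⟫) '' closedBall 0 ρ) :=
    (convex_closedBall 0 ρ).isPreconnected.image _
      (continuous_const.inner continuous_id).continuousOn
  set δ := (ρ / ‖w‖) • w
  have hδ : δ ∈ closedBall 0 ρ := by
    rw [mem_closedBall_zero_iff, norm_smul, Real.norm_of_nonneg (by positivity),
      div_mul_cancel₀ _ (norm_ne_zero_iff.2 hw)]
  have hinner : ⟪w, δ⟫ = ρ * ‖w‖ := by
    rw [real_inner_smul_right, real_inner_self_eq_norm_sq]
    field_simp [norm_ne_zero_iff.2 hw]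
  refine hconn.Icc_subset ⟨-δ, ?_, ?_⟩ ⟨δ, hδ, hinner⟩
  · rwa [mem_closedBall_zero_iff, norm_neg, ← mem_closedBall_zero_iff]
  · simp only [inner_neg_right, hinner]

theorem isGreatest_image_closedBall_inner_add_sq (w : E) (r : ℝ) {u ρ : ℝ} (hu : 0 ≤ u)
    (hρ : 0 ≤ ρ) :
    IsGreatest ((fun δ => r * ⟪w, δ⟫ + 1 / 2 * u * ⟪w, δ⟫ ^ 2) '' closedBall 0 ρ)
      (ρ * |r| * ‖w‖ + 1 / 2 * ρ ^ 2 * u * ‖w‖ ^ 2) := by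
  have h := isGreatest_image_Icc_mul_add_sq r hu (mul_nonneg hρ (norm_nonneg w))
  rw [← image_inner_closedBall_zero w hρ, image_image] at h
  convert h using 1
  ring

end InnerProductSpace

section EuclideanSpace

variable {ι : Type*} [Fintype ι]

theorem norm_toLp_two_eq_sqrt_sum_sq (x : ι → ℝ) : ‖toLp 2 x‖ = √(∑ i, x i ^ 2) := by
  simp [EuclideanSpace.norm_eq]

theorem inner_toLp_two_eq_sum_mul (x y : ι → ℝ) : ⟪toLp 2 x, toLp 2 y⟫ = ∑ i, x i * y i := by
  simp [EuclideanSpace.inner_toLp_toLp, dotProduct, mul_comm]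

end EuclideanSpace

/-- Section 4.1: for `w ∈ ℝ^d`, `r ∈ ℝ`, `u ≥ 0`, `ρ > 0`, the maximum over
all `δ` with `‖δ‖₂ ≤ ρ` of `r·wᵀδ + ½ u (wᵀδ)²` equals `ρ|r|‖w‖₂ + ½ ρ² u ‖w‖₂²`. -/
theorem stmt17 (d : ℕ) (w : Fin d → ℝ) (r u ρ : ℝ) (hu : 0 ≤ u) (hρ : 0 < ρ) :
    IsGreatest {y : ℝ | ∃ δ : Fin d → ℝ, Real.sqrt (∑ i, (δ i) ^ 2) ≤ ρ ∧
        y = r * (∑ i, w i * δ i) + (1 / 2) * u * (∑ i, w i * δ i) ^ 2}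
      (ρ * |r| * Real.sqrt (∑ i, (w i) ^ 2) + (1 / 2) * ρ ^ 2 * u * (∑ i, (w i) ^ 2)) := by
  have hset : {y : ℝ | ∃ δ : Fin d → ℝ, √(∑ i, (δ i) ^ 2) ≤ ρ ∧
      y = r * (∑ i, w i * δ i) + (1 / 2) * u * (∑ i, w i * δ i) ^ 2} =
      (fun δ => r * ⟪toLp 2 w, δ⟫ + 1 / 2 * u * ⟪toLp 2 w, δ⟫ ^ 2) '' closedBall 0 ρ := by
    ext y
    constructor
    · rintro ⟨δ, hδ, rfl⟩
      refine ⟨toLp 2 δ, ?_, by simp only [inner_toLp_two_eq_sum_mul]⟩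
      rwa [mem_closedBall_zero_iff, norm_toLp_two_eq_sqrt_sum_sq]
    · rintro ⟨δ, hδ, rfl⟩
      refine ⟨ofLp δ, ?_, by rw [← inner_toLp_two_eq_sum_mul, toLp_ofLp]⟩
      rwa [← norm_toLp_two_eq_sqrt_sum_sq, toLp_ofLp, ← mem_closedBall_zero_iff]
  have key := isGreatest_image_closedBall_inner_add_sq (toLp 2 w) r hu hρ.le
  rwa [norm_toLp_two_eq_sqrt_sum_sq, Real.sq_sqrt (Finset.sum_nonneg fun i _ => sq_nonneg (w i)),
    ← hset] at key
end
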